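/- arXiv:1304.0227 — 4 statements merged into one kernel-verified Lean document; each statement's English description precedes it below -/
import Mathlib

section
/- The Banach space c₀(ℕ,K) equipped with its norm topology is homeomorphic, as a topological space, to the countable product K^ℕ equipped with the Tychonoff product topology. -/
/-!
Both spaces are nonempty, separable and complete for a non-archimedean uniformity with a countable
basis, and no point of either has a compact neighbourhood: both are infinite-dimensional Hausdorff
topological vector spaces over the complete field `K`, so Riesz's theorem applies. Every such space
is homeomorphic to the Baire space `ℕ → ℕ`. Indeed, a nonempty clopen set is not totally bounded,
so the classes of a small enough entourage that is an equivalence relation cut it into countably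
infinitely many nonempty clopen pieces of diameter `< 1/k`. Iterating this gives a Lusin scheme
indexed by finite sequences in `ℕ`, and the map sending a branch to the point where its pieces
shrink is the homeomorphism.
-/

open Filter Function Set Topology TopologicalSpace UniformSpace
open scoped ENNReal ZeroAtInfty Uniformity

instance IsUltrametricDist.isUltraUniformity {X : Type*} [PseudoMetricSpace X]
    [IsUltrametricDist X] : IsUltraUniformity X :=
  .mk_of_hasBasis Metric.uniformity_basis_dist
    (fun _ _ => ⟨fun x y h => by simpa only [mem_ofPred_eq, dist_comm] using h⟩)
    (fun _ _ => ⟨fun x y z hxy hyz => (dist_triangle_max x y z).trans_lt (max_lt hxy hyz)⟩)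

section Partition

variable {X : Type*} [UniformSpace X]

theorem IsOpen.not_totallyBounded [CompleteSpace X] (h : ∀ x : X, ∀ U ∈ 𝓝 x, ¬IsCompact U)
    {s : Set X} (hs : IsOpen s) (hne : s.Nonempty) : ¬TotallyBounded s := fun htb =>
  h hne.some (closure s) (mem_of_superset (hs.mem_nhds hne.some_mem) subset_closure)
    (htb.closure.isCompact_of_isClosed isClosed_closure)

variable [IsUltraUniformity X]

theorem IsClopen.exists_partition_of_not_totallyBounded [SeparableSpace X] {s : Set X}
    (hs : IsClopen s) (hs_tb : ¬TotallyBounded s) {U : SetRel X X} (hU : U ∈ 𝓤 X) :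
    ∃ p : ℕ → Set X, (∀ n, IsClopen (p n)) ∧ (∀ n, (p n).Nonempty) ∧ (∀ n, p n ×ˢ p n ⊆ U) ∧
      Pairwise (Disjoint on p) ∧ ⋃ n, p n = s := by
  obtain ⟨V, hV, -, -, hV_cover⟩ : ∃ V : SetRel X X, V ∈ 𝓤 X ∧ V.IsSymm ∧ V.IsTrans ∧
      ∀ t : Set X, t.Finite → ¬s ⊆ ⋃ y ∈ t, {x | (x, y) ∈ V} := by
    simpa [IsUltraUniformity.hasBasis.totallyBounded_iff] using hs_tb
  obtain ⟨W, ⟨hW, _, _⟩, hWVU⟩ := IsUltraUniformity.hasBasis.mem_iff.1 (inter_mem hV hU)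
  set piece : X → Set X := fun x => s ∩ ball x W
  have piece_eq : ∀ {x z}, z ∈ piece x → piece x = piece z := fun hz => by
    simp only [piece, ball_eq_of_mem hz.2]
  have mem_piece : ∀ {z}, z ∈ s → z ∈ piece z := fun hz => ⟨hz, mem_ball_self _ hW⟩
  have hP_countable : (piece '' s).Countable := by
    obtain ⟨D, hD_countable, hD_dense⟩ := exists_countable_dense X
    refine (hD_countable.image piece).mono ?_
    rintro _ ⟨x, hx, rfl⟩
    obtain ⟨d, hdD, hd⟩ := hD_dense.exists_mem_open
      (hs.isOpen.inter (isOpen_ball_of_mem_uniformity x hW)) ⟨x, mem_piece hx⟩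
    exact ⟨d, hdD, (piece_eq hd).symm⟩
  -- finitely many pieces would give a finite cover of `s` by `V`-balls
  have hP_infinite : (piece '' s).Infinite := by
    intro hP_finite
    obtain ⟨t, -, ht, hPt⟩ := exists_subset_image_finite_and.1 ⟨_, subset_rfl, hP_finite, rfl⟩
    refine hV_cover t ht fun z hz => ?_
    obtain ⟨y, hy, hyz⟩ : piece z ∈ piece '' t := hPt ▸ mem_image_of_mem piece hz
    have hzy : z ∈ ball y W := (hyz ▸ mem_piece hz : z ∈ piece y).2
    exact mem_biUnion hy (hWVU (W.symm hzy)).1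
  have := hP_countable.to_subtype
  have := hP_infinite.to_subtype
  obtain ⟨e⟩ : Nonempty (ℕ ≃ piece '' s) := nonempty_equiv_of_countable
  choose c hc_mem hc using fun n => (e n).2
  refine ⟨fun n => piece (c n), fun n => ?_, fun n => ⟨c n, mem_piece (hc_mem n)⟩, fun n => ?_,
    fun m n hmn => ?_, ?_⟩
  · exact hs.inter (isClopen_ball_of_isSymm_of_isTrans_of_mem_uniformity _ hW)
  · rintro ⟨y, z⟩ ⟨hy, hz⟩
    exact (hWVU (W.trans (W.symm hy.2) hz.2)).2
  · refine not_not.1 fun h => hmn (e.injective (Subtype.ext ?_))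
    obtain ⟨z, hzm, hzn⟩ := not_disjoint_iff.1 h
    rw [← hc, ← hc, piece_eq hzm, piece_eq hzn]
  · refine subset_antisymm (iUnion_subset fun n => inter_subset_left) fun z hz => ?_
    obtain ⟨n, hn⟩ := e.surjective ⟨_, z, hz, rfl⟩
    exact mem_iUnion.2 ⟨n, by rw [hc, hn]; exact mem_piece hz⟩

end Partition

namespace CantorScheme

open PiNat

variable {β α : Type*} {A : List β → Set α}

structure IsClopenPartition [PseudoMetricSpace α] (A : List β → Set α) : Prop where
  nil : A [] = univ
  iUnion_cons (l : List β) : ⋃ b, A (b :: l) = A l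
  disjoint : CantorScheme.Disjoint A
  isClopen (l : List β) : IsClopen (A l)
  nonempty (l : List β) : (A l).Nonempty
  vanishingDiam : VanishingDiam A

namespace IsClopenPartition

section

variable [PseudoMetricSpace α]

protected theorem antitone (hA : IsClopenPartition A) : CantorScheme.Antitone A :=
  fun l b => (subset_iUnion (fun b => A (b :: l)) b).trans (hA.iUnion_cons l).subset

theorem disjoint_of_length_eq (hA : IsClopenPartition A) {l l' : List β}
    (hlen : l.length = l'.length) (hne : l ≠ l') : _root_.Disjoint (A l) (A l') := by
  induction l generalizing l' with
  | nil => exact absurd (List.length_eq_zero_iff.1 hlen.symm).symm hne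
  | cons b l ih =>
    obtain ⟨b', l', rfl⟩ := List.exists_cons_of_length_eq_add_one hlen.symm
    by_cases h : l = l'
    · subst h
      exact hA.disjoint l fun hb => hne (hb ▸ rfl)
    · exact (ih (Nat.succ_injective hlen) h).mono (hA.antitone _ _) (hA.antitone _ _)

theorem exists_forall_mem_res (hA : IsClopenPartition A) (z : α) :
    ∃ x : ℕ → β, ∀ n, z ∈ A (res x n) := by
  have hstep (l : {l // z ∈ A l}) : ∃ b, z ∈ A (b :: l) :=
    mem_iUnion.1 ((hA.iUnion_cons l).symm ▸ l.2)
  choose next hnext using hstep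
  let path (n : ℕ) : {l // z ∈ A l} :=
    (fun l => ⟨next l :: l, hnext l⟩)^[n] ⟨[], hA.nil ▸ mem_univ z⟩
  have hres (n : ℕ) : res (fun n => next (path n)) n = path n := by
    induction n with
    | zero => rfl
    | succ n ih => simp only [res_succ, ih, path, iterate_succ_apply']
  exact ⟨fun n => next (path n), fun n => hres n ▸ (path n).2⟩

end

theorem nonempty_homeomorph [TopologicalSpace β] [DiscreteTopology β] [MetricSpace α]
    [CompleteSpace α] (hA : IsClopenPartition A) :
    Nonempty ((ℕ → β) ≃ₜ α) := by
  have hdom : (inducedMap A).1 = univ := ClosureAntitone.map_of_vanishingDiam hA.vanishingDiam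
    (hA.antitone.closureAntitone fun l => (hA.isClopen l).isClosed) hA.nonempty
  set F : (ℕ → β) → α := fun x => (inducedMap A).2 ⟨x, hdom ▸ mem_univ x⟩
  have hF_mem (x : ℕ → β) (n : ℕ) : F x ∈ A (res x n) := map_mem _ n
  have hF_inj : Injective F := fun x y h => congrArg Subtype.val (hA.disjoint.map_injective h)
  have hF_cont : Continuous F := hA.vanishingDiam.map_continuous.comp (continuous_id.subtype_mk _)
  have hF_surj : Surjective F := fun z => by
    obtain ⟨x, hx⟩ := hA.exists_forall_mem_res z
    refine ⟨x, eq_of_forall_dist_le fun ε hε => ?_⟩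
    obtain ⟨n, hn⟩ := hA.vanishingDiam.dist_lt ε hε x
    exact (hn _ (hF_mem x n) _ (hx n)).le
  have hF_image (x : ℕ → β) (n : ℕ) : F '' cylinder x n = A (res x n) := by
    refine subset_antisymm ?_ fun z hz => ?_
    · rintro _ ⟨y, hy, rfl⟩
      rw [cylinder_eq_res] at hy
      exact hy ▸ hF_mem y n
    · obtain ⟨y, rfl⟩ := hF_surj z
      refine ⟨y, ?_, rfl⟩
      rw [cylinder_eq_res]
      by_contra hne
      exact (hA.disjoint_of_length_eq (by simp only [res_length]) hne).ne_of_mem (hF_mem y n) hz rfl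
  have hF_open : IsOpenMap F := (isTopologicalBasis_cylinders _).isOpenMap_iff.2 <| by
    rintro _ ⟨x, n, rfl⟩
    exact hF_image x n ▸ (hA.isClopen _).isOpen
  exact ⟨(Equiv.ofBijective F ⟨hF_inj, hF_surj⟩).toHomeomorphOfContinuousOpen hF_cont hF_open⟩

end IsClopenPartition

end CantorScheme

section Baire

variable {X : Type*}

theorem exists_isClopenPartition [MetricSpace X] [IsUltraUniformity X] [CompleteSpace X]
    [SeparableSpace X] [Nonempty X] (h : ∀ x : X, ∀ U ∈ 𝓝 x, ¬IsCompact U) :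
    ∃ A : List ℕ → Set X, CantorScheme.IsClopenPartition A := by
  have hsplit (k : ℕ) (s : Set X) (hs : IsClopen s) (hne : s.Nonempty) :
      ∃ p : ℕ → Set X, (∀ n, IsClopen (p n)) ∧ (∀ n, (p n).Nonempty) ∧
        (∀ n, p n ×ˢ p n ⊆ {q | edist q.1 q.2 < (k : ℝ≥0∞)⁻¹}) ∧ Pairwise (Disjoint on p) ∧
        ⋃ n, p n = s :=
    hs.exists_partition_of_not_totallyBounded (hs.isOpen.not_totallyBounded h hne)
      (edist_mem_uniformity (by simp))
  choose! part hclopen hne hsmall hdisj hunion using hsplit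
  let A (l : List ℕ) : Set X := l.rec univ fun n l s => part l.length s n
  have hA (l : List ℕ) : IsClopen (A l) ∧ (A l).Nonempty := by
    induction l with
    | nil => exact ⟨isClopen_univ, univ_nonempty⟩
    | cons n l ih => exact ⟨hclopen _ _ ih.1 ih.2 n, hne _ _ ih.1 ih.2 n⟩
  refine ⟨A, ⟨rfl, fun l => hunion _ _ (hA l).1 (hA l).2, fun l => hdisj _ _ (hA l).1 (hA l).2,
    fun l => (hA l).1, fun l => (hA l).2, fun x => ?_⟩⟩
  refine (tendsto_add_atTop_iff_nat 1).1 <| tendsto_of_tendsto_of_tendsto_of_le_of_le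
    tendsto_const_nhds ENNReal.tendsto_inv_nat_nhds_zero (fun _ => zero_le) fun n => ?_
  have hlevel : A (PiNat.res x (n + 1)) = part n (A (PiNat.res x n)) (x n) := by
    simp only [PiNat.res_succ, A, PiNat.res_length]
  rw [hlevel]
  exact Metric.ediam_le fun y hy z hz =>
    (hsmall n _ (hA _).1 (hA _).2 (x n) (mk_mem_prod hy hz)).le

theorem nonempty_homeomorph_nat_nat [UniformSpace X] [IsUltraUniformity X]
    [IsCountablyGenerated (𝓤 X)] [T0Space X] [CompleteSpace X] [SeparableSpace X] [Nonempty X]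
    (h : ∀ x : X, ∀ U ∈ 𝓝 x, ¬IsCompact U) : Nonempty ((ℕ → ℕ) ≃ₜ X) := by
  let := UniformSpace.metricSpace X
  obtain ⟨A, hA⟩ := exists_isClopenPartition h
  exact hA.nonempty_homeomorph

end Baire

theorem not_isCompact_of_not_finiteDimensional (𝕜 : Type*) [NontriviallyNormedField 𝕜]
    [CompleteSpace 𝕜] {E : Type*} [AddCommGroup E] [Module 𝕜 E] [UniformSpace E] [T2Space E]
    [IsUniformAddGroup E] [ContinuousSMul 𝕜 E] (hE : ¬FiniteDimensional 𝕜 E) :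
    ∀ x : E, ∀ U ∈ 𝓝 x, ¬IsCompact U := fun x U hU hc =>
  hE (.of_exists_totallyBounded_nhds 𝕜 ⟨x, U, hU, hc.totallyBounded⟩)

namespace ZeroAtInftyContinuousMap

variable {β : Type*}

def ofTendsto [TopologicalSpace β] [Zero β] (v : ℕ → β) (hv : Tendsto v atTop (𝓝 0)) :
    C₀(ℕ, β) where
  toFun := v
  continuous_toFun := continuous_of_discreteTopology
  zero_at_infty' := by rwa [cocompact_eq_cofinite, Nat.cofinite_eq_atTop]

instance {α : Type*} [TopologicalSpace α] [PseudoMetricSpace β] [Zero β] [IsUltrametricDist β] :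
    IsUltrametricDist C₀(α, β) where
  dist_triangle_max f g h := by
    simp only [← dist_toBCF_eq_dist]
    refine (BoundedContinuousFunction.dist_le (le_max_of_le_left dist_nonneg)).2 fun x =>
      (dist_triangle_max (f x) (g x) (h x)).trans <| max_le_max
        (f.toBCF.dist_coe_le_dist (g := g.toBCF) x) (g.toBCF.dist_coe_le_dist (g := h.toBCF) x)

instance [PseudoMetricSpace β] [Zero β] [SeparableSpace β] : SecondCountableTopology C₀(ℕ, β) := by
  obtain ⟨D, hD_countable, hD_dense⟩ := exists_countable_dense β
  have := hD_countable.to_subtype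
  let trunc (v : Σ N, Fin N → D) : C₀(ℕ, β) :=
    ofTendsto (fun n => if h : n < v.1 then v.2 ⟨n, h⟩ else 0) <| tendsto_const_nhds.congr' <|
      eventually_atTop.2 ⟨v.1, fun n hn => by simp [hn.not_gt]⟩
  refine Metric.secondCountable_of_almost_dense_set fun ε hε => ⟨range trunc, countable_range _,
    fun f => ?_⟩
  have hf : Tendsto f atTop (𝓝 0) := by
    simpa [cocompact_eq_cofinite, Nat.cofinite_eq_atTop] using zero_at_infty f
  obtain ⟨N, hN⟩ := eventually_atTop.1 (Metric.tendsto_nhds.1 hf ε hε)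
  choose d hdD hd using fun n => hD_dense.exists_dist_lt (f n) hε
  refine ⟨trunc ⟨N, fun i => ⟨d i, hdD i⟩⟩, mem_range_self _, ?_⟩
  rw [← dist_toBCF_eq_dist]
  refine (BoundedContinuousFunction.dist_le hε.le).2 fun n => ?_
  by_cases hn : n < N
  · simpa [trunc, ofTendsto, hn] using (hd n).le
  · simpa [trunc, ofTendsto, hn] using (hN n (not_lt.1 hn)).le

theorem not_finiteDimensional_nat (𝕜 : Type*) [NormedField 𝕜] :
    ¬FiniteDimensional 𝕜 C₀(ℕ, 𝕜) := fun _ => by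
  let coeFn : C₀(ℕ, 𝕜) →ₗ[𝕜] ℕ → 𝕜 :=
    { toFun := (⇑), map_add' := coe_add, map_smul' := coe_smul }
  refine Module.Finite.not_linearIndependent_of_infinite
    (fun n => ofTendsto (Pi.single n 1) ?_) (.of_comp coeFn (Pi.linearIndependent_single_one ℕ 𝕜))
  exact tendsto_const_nhds.congr' <| (eventually_gt_atTop n).mono fun m hm => by
    simp [hm.ne']

end ZeroAtInftyContinuousMap

/-- Let `K` be a field with a complete non-Archimedean multiplicative
norm whose value group is nontrivial, and assume `K` is locally compact.  Then the Banach
space `c₀(ℕ, K)` with its norm topology is homeomorphic to the countable product `K^ℕ`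
with the Tychonoff product topology. -/
theorem c0_homeomorph_pi (K : Type*) [NontriviallyNormedField K] [IsUltrametricDist K]
    [CompleteSpace K] [LocallyCompactSpace K] :
    Nonempty (C₀(ℕ, K) ≃ₜ (ℕ → K)) := by
  have : ProperSpace K := .of_nontriviallyNormedField_of_weaklyLocallyCompactSpace K
  obtain ⟨e₁⟩ := nonempty_homeomorph_nat_nat (X := C₀(ℕ, K)) <|
    not_isCompact_of_not_finiteDimensional K (ZeroAtInftyContinuousMap.not_finiteDimensional_nat K)
  obtain ⟨e₂⟩ := nonempty_homeomorph_nat_nat (X := ℕ → K) <|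
    not_isCompact_of_not_finiteDimensional K fun _ =>
      Module.Finite.not_linearIndependent_of_infinite _ (Pi.linearIndependent_single_one ℕ K)
  exact ⟨e₁.symm.trans e₂⟩
end

section
/- The topological spaces K and B \ {1} are homeomorphic, where B = {x ∈ K : |x| ≤ 1} is the closed unit ball of K. -/
/-!
Fix `ϖ` with `0 < ‖ϖ‖ < 1`. In an ultrametric field all the sets involved are clopen (away
from `0`), so maps defined piecewise on them are continuous. The affine map `x ↦ 1 + ϖ x`
carries the unit ball onto `Q = closedBall 1 ‖ϖ‖`. Inversion carries `{1 < ‖x‖}` onto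
`{0 < ‖w‖ < 1}`, which misses the units outside `Q`; a Hilbert hotel repairs this: on the
`ϖ^ℤ`-orbit of those units use `v ↦ (ϖ v)⁻¹` instead, which pushes each sphere
`‖w‖ = ‖ϖ‖ ^ n` one step outwards. This `twistedInv` is an involution exchanging `{1 < ‖x‖}`
with `closedBall 0 1 \ ({0} ∪ Q)`, and the two pieces glue to `K ≃ₜ closedBall 0 1 \ {0}`.
Translation by `1` moves the puncture to `1`.
-/

open Metric Topology IsUltrametricDist

lemma IsClopen.eventually_mem_iff {X : Type*} [TopologicalSpace X] {s : Set X} (hs : IsClopen s)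
    (x₀ : X) : ∀ᶠ x in 𝓝 x₀, x ∈ s ↔ x₀ ∈ s := by
  by_cases h : x₀ ∈ s
  · filter_upwards [hs.isOpen.mem_nhds h] with x hx using iff_of_true hx h
  · filter_upwards [hs.compl.isOpen.mem_nhds h] with x hx using iff_of_false hx h

lemma continuousAt_ite_of_eventually_iff {X Y : Type*} [TopologicalSpace X] [TopologicalSpace Y]
    {p : X → Prop} [DecidablePred p] {f g : X → Y} {x₀ : X} (hp : ∀ᶠ x in 𝓝 x₀, p x ↔ p x₀)
    (hf : p x₀ → ContinuousAt f x₀) (hg : ¬p x₀ → ContinuousAt g x₀) :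
    ContinuousAt (fun x => if p x then f x else g x) x₀ := by
  by_cases h : p x₀
  · exact (hf h).congr (hp.mono fun x hx => (if_pos (hx.2 h)).symm)
  · exact (hg h).congr (hp.mono fun x hx => (if_neg (mt hx.1 h)).symm)

namespace IsUltrametricDist

variable {E : Type*} [SeminormedAddCommGroup E] [IsUltrametricDist E]

lemma norm_eq_of_norm_sub_lt {x y : E} (h : ‖x - y‖ < ‖y‖) : ‖x‖ = ‖y‖ := by
  rw [← sub_add_cancel x y, norm_add_eq_max_of_norm_ne_norm h.ne, max_eq_right h.le]

lemma norm_sub_eq_of_norm_lt {x y : E} (h : ‖x‖ < ‖y‖) : ‖x - y‖ = ‖y‖ := by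
  rw [sub_eq_add_neg, norm_add_eq_max_of_norm_ne_norm (by rw [norm_neg]; exact h.ne), norm_neg,
    max_eq_right h.le]

def closedBallDiffHomeomorph {r : ℝ} (a : E) (ha : ‖a‖ ≤ r) :
    ↥(closedBall (0 : E) r \ {0}) ≃ₜ ↥(closedBall (0 : E) r \ {a}) :=
  (Homeomorph.addRight a).subtype fun x => by
    simp only [Set.mem_sdiff, mem_closedBall, dist_zero_right, Set.mem_singleton_iff,
      Homeomorph.coe_addRight, add_eq_right]
    refine and_congr_left fun _ => ⟨fun hx => ?_, fun hx => ?_⟩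
    · exact (norm_add_le_max x a).trans (max_le hx ha)
    · rw [← add_sub_cancel_right x a, sub_eq_add_neg]
      exact (norm_add_le_max _ _).trans (max_le hx (by rwa [norm_neg]))

end IsUltrametricDist

namespace PuncturedClosedBall

variable {K : Type*} [NormedField K]

def farUnits (ϖ : K) : Set K := {u | ‖u‖ = 1 ∧ ‖ϖ‖ < ‖u - 1‖}

def farUnitsOrbit (ϖ : K) : Set K := {v | ∃ n : ℤ, ϖ ^ n * v ∈ farUnits ϖ}

open Classical in
noncomputable def twistedInv (ϖ v : K) : K := if v ∈ farUnitsOrbit ϖ then (ϖ * v)⁻¹ else v⁻¹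

noncomputable def toPuncturedBall (ϖ x : K) : K :=
  if ‖x‖ ≤ 1 then 1 + ϖ * x else twistedInv ϖ x

noncomputable def ofPuncturedBall (ϖ w : K) : K :=
  if ‖w - 1‖ ≤ ‖ϖ‖ then ϖ⁻¹ * (w - 1) else twistedInv ϖ w

variable {ϖ : K}

lemma inv_mem_farUnits {u : K} (hu : u ∈ farUnits ϖ) : u⁻¹ ∈ farUnits ϖ := by
  obtain ⟨hu1, hϖu⟩ := hu
  have hu0 : u ≠ 0 := norm_ne_zero_iff.mp (by rw [hu1]; exact one_ne_zero)
  have h : u⁻¹ - 1 = -(u - 1) * u⁻¹ := by field_simp; ring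
  refine ⟨by rw [norm_inv, hu1, inv_one], ?_⟩
  rwa [h, norm_mul, norm_neg, norm_inv, hu1, inv_one, mul_one]

lemma farUnits_subset_farUnitsOrbit : farUnits ϖ ⊆ farUnitsOrbit ϖ :=
  fun u hu => ⟨0, by rwa [zpow_zero, one_mul]⟩

lemma mul_mem_farUnitsOrbit_iff (hϖ : ϖ ≠ 0) {v : K} :
    ϖ * v ∈ farUnitsOrbit ϖ ↔ v ∈ farUnitsOrbit ϖ := by
  constructor
  · rintro ⟨n, hn⟩
    exact ⟨n + 1, by rwa [zpow_add_one₀ hϖ, mul_assoc]⟩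
  · rintro ⟨n, hn⟩
    exact ⟨n - 1, by rwa [← mul_assoc, ← zpow_add_one₀ hϖ, sub_add_cancel]⟩

lemma inv_mem_farUnitsOrbit {v : K} (hv : v ∈ farUnitsOrbit ϖ) : v⁻¹ ∈ farUnitsOrbit ϖ := by
  obtain ⟨n, hn⟩ := hv
  exact ⟨-n, by rw [zpow_neg, ← mul_inv]; exact inv_mem_farUnits hn⟩

lemma norm_zpow_mul_eq_one {n : ℤ} {v : K} (h : ϖ ^ n * v ∈ farUnits ϖ) : ‖ϖ‖ ^ n * ‖v‖ = 1 := by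
  rw [← norm_zpow, ← norm_mul]; exact h.1

lemma mem_farUnits_of_mem_farUnitsOrbit (hϖ1 : ‖ϖ‖ < 1) {v : K}
    (hv : v ∈ farUnitsOrbit ϖ) (hv1 : ‖v‖ = 1) : v ∈ farUnits ϖ := by
  obtain ⟨n, hn⟩ := hv
  have hn0 : n = 0 := by
    rw [← zpow_eq_one_iff_right₀ (norm_nonneg ϖ) hϖ1.ne]
    simpa [hv1] using norm_zpow_mul_eq_one hn
  rwa [hn0, zpow_zero, one_mul] at hn

lemma one_le_norm_mul_of_mem_farUnitsOrbit (hϖ : ϖ ≠ 0) (hϖ1 : ‖ϖ‖ < 1) {v : K}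
    (hv : v ∈ farUnitsOrbit ϖ) (hv1 : 1 < ‖v‖) : 1 ≤ ‖ϖ * v‖ := by
  obtain ⟨n, hn⟩ := hv
  have hϖ0 : 0 < ‖ϖ‖ := norm_pos_iff.mpr hϖ
  have hv' : ‖v‖ = ‖ϖ‖ ^ (-n) := by
    rw [zpow_neg]; exact eq_inv_of_mul_eq_one_right (norm_zpow_mul_eq_one hn)
  have hn0 : 0 < n := by
    rw [hv', one_lt_zpow_iff_right_of_lt_one₀ hϖ0 hϖ1] at hv1; omega
  rw [norm_mul, hv', ← zpow_one_add₀ hϖ0.ne']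
  exact one_le_zpow_of_nonpos₀ hϖ0 hϖ1.le (by omega)

lemma twistedInv_twistedInv (hϖ : ϖ ≠ 0) (v : K) : twistedInv ϖ (twistedInv ϖ v) = v := by
  by_cases hv : v ∈ farUnitsOrbit ϖ
  · have : (ϖ * v)⁻¹ ∈ farUnitsOrbit ϖ :=
      inv_mem_farUnitsOrbit ((mul_mem_farUnitsOrbit_iff hϖ).mpr hv)
    have h : twistedInv ϖ v = (ϖ * v)⁻¹ := if_pos hv
    rw [h, twistedInv, if_pos this, mul_inv, inv_inv, inv_mul_cancel_left₀ hϖ]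
  · have : v⁻¹ ∉ farUnitsOrbit ϖ := fun h => hv (by simpa using inv_mem_farUnitsOrbit h)
    have h : twistedInv ϖ v = v⁻¹ := if_neg hv
    rw [h, twistedInv, if_neg this, inv_inv]

lemma one_lt_norm_twistedInv (hϖ : ϖ ≠ 0) (hϖ1 : ‖ϖ‖ < 1) {w : K} (hw0 : w ≠ 0)
    (hw1 : ‖w‖ ≤ 1) (hwϖ : ‖ϖ‖ < ‖w - 1‖) : 1 < ‖twistedInv ϖ w‖ := by
  by_cases hO : w ∈ farUnitsOrbit ϖ
  · rw [twistedInv, if_pos hO, norm_inv, one_lt_inv₀ (norm_pos_iff.mpr (mul_ne_zero hϖ hw0)),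
      norm_mul]
    exact mul_lt_one_of_nonneg_of_lt_one_left (norm_nonneg ϖ) hϖ1 hw1
  · have hlt : ‖w‖ < 1 := hw1.lt_of_ne fun h => hO (farUnits_subset_farUnitsOrbit ⟨h, hwϖ⟩)
    rwa [twistedInv, if_neg hO, norm_inv, one_lt_inv₀ (norm_pos_iff.mpr hw0)]

lemma toPuncturedBall_ofPuncturedBall (hϖ : ϖ ≠ 0) (hϖ1 : ‖ϖ‖ < 1) {w : K}
    (hw : w ∈ closedBall (0 : K) 1 \ {0}) : toPuncturedBall ϖ (ofPuncturedBall ϖ w) = w := by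
  simp only [Set.mem_sdiff, mem_closedBall, dist_zero_right, Set.mem_singleton_iff] at hw
  by_cases hwϖ : ‖w - 1‖ ≤ ‖ϖ‖
  · have hx : ‖ϖ⁻¹ * (w - 1)‖ ≤ 1 := by
      rwa [norm_mul, norm_inv, inv_mul_le_one₀ (norm_pos_iff.mpr hϖ)]
    rw [ofPuncturedBall, if_pos hwϖ, toPuncturedBall, if_pos hx, mul_inv_cancel_left₀ hϖ,
      add_sub_cancel]
  · have hx := one_lt_norm_twistedInv hϖ hϖ1 hw.2 hw.1 (not_le.mp hwϖ)
    rw [ofPuncturedBall, if_neg hwϖ, toPuncturedBall, if_neg hx.not_ge, twistedInv_twistedInv hϖ]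

section Ultrametric

variable [IsUltrametricDist K]

lemma mem_farUnits_of_norm_sub_le (hϖ1 : ‖ϖ‖ < 1) {u u' : K} (hu : u ∈ farUnits ϖ)
    (h : ‖u' - u‖ ≤ ‖ϖ‖) : u' ∈ farUnits ϖ := by
  obtain ⟨hu1, hϖu⟩ := hu
  refine ⟨hu1 ▸ norm_eq_of_norm_sub_lt (h.trans_lt (hu1 ▸ hϖ1)), ?_⟩
  by_contra! h'
  have : ‖u - 1‖ ≤ ‖ϖ‖ := by
    rw [← sub_add_sub_cancel u u' 1]
    exact (norm_add_le_max _ _).trans (max_le (by rwa [norm_sub_rev]) h')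
  exact this.not_gt hϖu

lemma mem_farUnitsOrbit_of_norm_sub_le (hϖ1 : ‖ϖ‖ < 1) {v v' : K} (hv : v ∈ farUnitsOrbit ϖ)
    (h : ‖v' - v‖ ≤ ‖ϖ‖ * ‖v‖) : v' ∈ farUnitsOrbit ϖ := by
  obtain ⟨n, hn⟩ := hv
  refine ⟨n, mem_farUnits_of_norm_sub_le hϖ1 hn ?_⟩
  calc ‖ϖ ^ n * v' - ϖ ^ n * v‖ = ‖ϖ ^ n‖ * ‖v' - v‖ := by rw [← mul_sub, norm_mul]
    _ ≤ ‖ϖ ^ n‖ * (‖ϖ‖ * ‖v‖) := by gcongr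
    _ = ‖ϖ‖ * ‖ϖ ^ n * v‖ := by rw [norm_mul]; ring
    _ = ‖ϖ‖ := by rw [hn.1, mul_one]

lemma eventually_mem_farUnitsOrbit_iff (hϖ : ϖ ≠ 0) (hϖ1 : ‖ϖ‖ < 1) {v₀ : K} (hv₀ : v₀ ≠ 0) :
    ∀ᶠ v in 𝓝 v₀, v ∈ farUnitsOrbit ϖ ↔ v₀ ∈ farUnitsOrbit ϖ := by
  have hr : 0 < ‖ϖ‖ * ‖v₀‖ := mul_pos (norm_pos_iff.mpr hϖ) (norm_pos_iff.mpr hv₀)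
  filter_upwards [ball_mem_nhds v₀ hr] with v hv
  rw [mem_ball, dist_eq_norm] at hv
  have hnorm : ‖v‖ = ‖v₀‖ :=
    norm_eq_of_norm_sub_lt (hv.trans_le (mul_le_of_le_one_left (norm_nonneg _) hϖ1.le))
  exact ⟨fun h => mem_farUnitsOrbit_of_norm_sub_le hϖ1 h (by rw [norm_sub_rev, hnorm]; exact hv.le),
    fun h => mem_farUnitsOrbit_of_norm_sub_le hϖ1 h hv.le⟩

lemma continuousAt_twistedInv (hϖ : ϖ ≠ 0) (hϖ1 : ‖ϖ‖ < 1) {v : K} (hv : v ≠ 0) :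
    ContinuousAt (twistedInv ϖ) v := by
  classical
  exact continuousAt_ite_of_eventually_iff (eventually_mem_farUnitsOrbit_iff hϖ hϖ1 hv)
    (fun _ => (continuousAt_const.mul continuousAt_id).inv₀ (mul_ne_zero hϖ hv))
    (fun _ => continuousAt_inv₀ hv)

lemma lt_norm_sub_one_of_norm_lt_one (hϖ1 : ‖ϖ‖ < 1) {w : K} (hw : ‖w‖ < 1) :
    ‖ϖ‖ < ‖w - 1‖ := by
  rwa [norm_sub_eq_of_norm_lt (hw.trans_eq norm_one.symm), norm_one]

lemma twistedInv_mem_of_one_lt_norm (hϖ : ϖ ≠ 0) (hϖ1 : ‖ϖ‖ < 1) {x : K} (hx : 1 < ‖x‖) :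
    twistedInv ϖ x ≠ 0 ∧ ‖twistedInv ϖ x‖ ≤ 1 ∧ ‖ϖ‖ < ‖twistedInv ϖ x - 1‖ := by
  have hx0 : x ≠ 0 := norm_pos_iff.mp (one_pos.trans hx)
  by_cases hO : x ∈ farUnitsOrbit ϖ
  · have hO' : (ϖ * x)⁻¹ ∈ farUnitsOrbit ϖ :=
      inv_mem_farUnitsOrbit ((mul_mem_farUnitsOrbit_iff hϖ).mpr hO)
    have hle : ‖(ϖ * x)⁻¹‖ ≤ 1 := by
      rw [norm_inv]
      exact inv_le_one_of_one_le₀ (one_le_norm_mul_of_mem_farUnitsOrbit hϖ hϖ1 hO hx)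
    rw [twistedInv, if_pos hO]
    refine ⟨inv_ne_zero (mul_ne_zero hϖ hx0), hle, ?_⟩
    rcases hle.eq_or_lt with h1 | h1
    · exact (mem_farUnits_of_mem_farUnitsOrbit hϖ1 hO' h1).2
    · exact lt_norm_sub_one_of_norm_lt_one hϖ1 h1
  · have hlt : ‖x⁻¹‖ < 1 := by rw [norm_inv]; exact inv_lt_one_of_one_lt₀ hx
    rw [twistedInv, if_neg hO]
    exact ⟨inv_ne_zero hx0, hlt.le, lt_norm_sub_one_of_norm_lt_one hϖ1 hlt⟩

lemma toPuncturedBall_mem (hϖ : ϖ ≠ 0) (hϖ1 : ‖ϖ‖ < 1) (x : K) :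
    toPuncturedBall ϖ x ∈ closedBall (0 : K) 1 \ {0} := by
  simp only [Set.mem_sdiff, mem_closedBall, dist_zero_right, Set.mem_singleton_iff]
  by_cases hx : ‖x‖ ≤ 1
  · have h1 : ‖1 + ϖ * x‖ = 1 := by
      refine (norm_eq_of_norm_sub_lt ?_).trans norm_one
      rw [add_sub_cancel_left, norm_one, norm_mul]
      exact mul_lt_one_of_nonneg_of_lt_one_left (norm_nonneg ϖ) hϖ1 hx
    rw [toPuncturedBall, if_pos hx, h1]
    exact ⟨le_rfl, fun h => by simp [h] at h1⟩
  · obtain ⟨h0, h1, -⟩ := twistedInv_mem_of_one_lt_norm hϖ hϖ1 (not_le.mp hx)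
    rw [toPuncturedBall, if_neg hx]
    exact ⟨h1, h0⟩

lemma ofPuncturedBall_toPuncturedBall (hϖ : ϖ ≠ 0) (hϖ1 : ‖ϖ‖ < 1) (x : K) :
    ofPuncturedBall ϖ (toPuncturedBall ϖ x) = x := by
  by_cases hx : ‖x‖ ≤ 1
  · have hϖx : ‖1 + ϖ * x - 1‖ ≤ ‖ϖ‖ := by
      rw [add_sub_cancel_left, norm_mul]
      exact mul_le_of_le_one_right (norm_nonneg ϖ) hx
    rw [toPuncturedBall, if_pos hx, ofPuncturedBall, if_pos hϖx, add_sub_cancel_left,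
      inv_mul_cancel_left₀ hϖ]
  · obtain ⟨-, -, hϖx⟩ := twistedInv_mem_of_one_lt_norm hϖ hϖ1 (not_le.mp hx)
    rw [toPuncturedBall, if_neg hx, ofPuncturedBall, if_neg hϖx.not_ge, twistedInv_twistedInv hϖ]

lemma continuous_toPuncturedBall (hϖ : ϖ ≠ 0) (hϖ1 : ‖ϖ‖ < 1) :
    Continuous (toPuncturedBall ϖ) := by
  refine continuous_iff_continuousAt.2 fun x => continuousAt_ite_of_eventually_iff ?_
    (fun _ => continuousAt_const.add (continuousAt_const.mul continuousAt_id))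
    (fun hx => continuousAt_twistedInv hϖ hϖ1 (by rintro rfl; simp at hx))
  simpa using (isClopen_closedBall (0 : K) one_ne_zero).eventually_mem_iff x

lemma continuousAt_ofPuncturedBall (hϖ : ϖ ≠ 0) (hϖ1 : ‖ϖ‖ < 1) {w : K} (hw : w ≠ 0) :
    ContinuousAt (ofPuncturedBall ϖ) w := by
  refine continuousAt_ite_of_eventually_iff ?_
    (fun _ => continuousAt_const.mul (continuousAt_id.sub continuousAt_const))
    (fun _ => continuousAt_twistedInv hϖ hϖ1 hw)
  simpa [dist_eq_norm] using
    (isClopen_closedBall (1 : K) (norm_ne_zero_iff.mpr hϖ)).eventually_mem_iff w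

noncomputable def homeomorphPuncturedBall (hϖ : ϖ ≠ 0) (hϖ1 : ‖ϖ‖ < 1) :
    K ≃ₜ ↥(closedBall (0 : K) 1 \ {0}) where
  toFun x := ⟨toPuncturedBall ϖ x, toPuncturedBall_mem hϖ hϖ1 x⟩
  invFun w := ofPuncturedBall ϖ w
  left_inv := ofPuncturedBall_toPuncturedBall hϖ hϖ1
  right_inv w := Subtype.ext (toPuncturedBall_ofPuncturedBall hϖ hϖ1 w.2)
  continuous_toFun := (continuous_toPuncturedBall hϖ hϖ1).subtype_mk _
  continuous_invFun := continuous_iff_continuousAt.2 fun w =>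
    (continuousAt_ofPuncturedBall hϖ hϖ1 w.2.2).comp continuous_subtype_val.continuousAt

end Ultrametric

end PuncturedClosedBall

theorem field_homeomorph_ball_sdiff_one_general (K : Type*) [NontriviallyNormedField K]
    [IsUltrametricDist K] :
    Nonempty (K ≃ₜ ↥(Metric.closedBall (0 : K) 1 \ {1})) := by
  obtain ⟨ϖ, hϖ0, hϖ1⟩ := NormedField.exists_norm_lt_one K
  exact ⟨(PuncturedClosedBall.homeomorphPuncturedBall (norm_pos_iff.mp hϖ0) hϖ1).trans
    (closedBallDiffHomeomorph 1 norm_one.le)⟩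

/-- Let `K` be a field with a complete non-Archimedean multiplicative
norm whose value group is nontrivial.  Then `K` is homeomorphic to `B \ {1}`, where
`B = {x ∈ K : ‖x‖ ≤ 1}` is the closed unit ball of `K`. -/
theorem field_homeomorph_ball_sdiff_one (K : Type*) [NontriviallyNormedField K]
    [IsUltrametricDist K] [CompleteSpace K] :
    Nonempty (K ≃ₜ ↥(Metric.closedBall (0 : K) 1 \ {1})) :=
  field_homeomorph_ball_sdiff_one_general K
end

section
/- Let M be a closed subset of X and let f : M → K be a continuous function. Then there exists a continuous function g : X → K extending f, i.e. g|_M = f. -/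
/-!
A closed subset `M` of an ultrametric space is a retract, so `f` extends by composing with a
retraction. Send `x` to any point of `M` in the closed ball of radius `2 d(x, M)` about `x`. By
the strong triangle inequality, every `y` with `d(x, y) < d(x, M)` has `d(y, M) = d(x, M)` and
the same closed ball, so choosing the point as a function of that ball makes the map locally
constant off `M`; at points of `M` it is continuous because `d(x, r x) ≤ 2 d(x, M)`.
-/

namespace Metric

theorem exists_mem_closedBall_two_mul_infDist {X : Type*} [PseudoMetricSpace X]
    {s : Set X} (hs : IsClosed s) (hne : s.Nonempty) (x : X) :
    ∃ y ∈ s, y ∈ closedBall x (2 * infDist x s) := by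
  rcases (infDist_nonneg (x := x) (s := s)).eq_or_lt with h0 | hpos
  · refine ⟨x, (hs.mem_iff_infDist_zero hne).mpr h0.symm, ?_⟩
    simp [← h0]
  · obtain ⟨y, hy, hxy⟩ := (infDist_lt_iff hne).mp (by linarith : infDist x s < 2 * infDist x s)
    exact ⟨y, hy, mem_closedBall'.mpr hxy.le⟩

section Retraction

variable {X : Type*} [MetricSpace X] (M : Set X) [Nonempty M]

/-- The choice depends on `x` only through the ball `closedBall x (2 * infDist x M)`. -/
noncomputable def nearRetraction (x : X) : M :=
  Classical.epsilon fun m : M => (m : X) ∈ closedBall x (2 * infDist x M)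

variable {M}

theorem dist_nearRetraction_le (hM : IsClosed M) (x : X) :
    dist x (nearRetraction M x) ≤ 2 * infDist x M :=
  have ⟨m, hm, hxm⟩ := exists_mem_closedBall_two_mul_infDist hM (Set.nonempty_coe_sort.mp ‹_›) x
  mem_closedBall'.mp <| Classical.epsilon_spec (p := fun m : M => (m : X) ∈ closedBall x _)
    ⟨⟨m, hm⟩, hxm⟩

theorem nearRetraction_coe (hM : IsClosed M) (m : M) : nearRetraction M m = m := by
  have h := dist_nearRetraction_le hM m
  rw [infDist_zero_of_mem m.2, mul_zero] at h
  exact Subtype.ext (dist_le_zero.mp h).symm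

theorem dist_nearRetraction_le_three_mul_dist (hM : IsClosed M) (x : X) (m : M) :
    dist (nearRetraction M x : X) m ≤ 3 * dist x m :=
  calc dist (nearRetraction M x : X) m
      ≤ dist (nearRetraction M x : X) x + dist x m := dist_triangle _ _ _
    _ ≤ 2 * infDist x M + dist x m := by rw [dist_comm]; gcongr; exact dist_nearRetraction_le hM x
    _ ≤ 3 * dist x m := by linarith [infDist_le_dist_of_mem (x := x) m.2]

end Retraction

section Ultrametric

variable {X : Type*} [MetricSpace X] [IsUltrametricDist X] {M : Set X}

theorem infDist_le_infDist_of_dist_lt {x y : X} (h : dist x y < infDist x M) :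
    infDist x M ≤ infDist y M := by
  rcases M.eq_empty_or_nonempty with rfl | hne
  · simp
  by_contra! hlt
  obtain ⟨m, hm, hym⟩ := (infDist_lt_iff hne).mp hlt
  have hxm : dist x m < infDist x M :=
    (IsUltrametricDist.dist_triangle_max x y m).trans_lt (max_lt h hym)
  exact (infDist_le_dist_of_mem hm).not_gt hxm

theorem infDist_eq_of_dist_lt {x y : X} (h : dist x y < infDist x M) :
    infDist y M = infDist x M := by
  have hle := infDist_le_infDist_of_dist_lt h
  refine le_antisymm (infDist_le_infDist_of_dist_lt ?_) hle
  rw [dist_comm]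
  exact h.trans_le hle

variable [Nonempty M]

theorem nearRetraction_eq_of_dist_lt {x y : X} (h : dist x y < infDist x M) :
    nearRetraction M y = nearRetraction M x := by
  have hxy : y ∈ closedBall x (2 * infDist x M) :=
    mem_closedBall'.mpr (by linarith [infDist_nonneg (x := x) (s := M)])
  simp only [nearRetraction, infDist_eq_of_dist_lt h,
    ← IsUltrametricDist.closedBall_eq_of_mem hxy]

theorem continuous_nearRetraction (hM : IsClosed M) : Continuous (nearRetraction M) := by
  refine continuous_iff_continuousAt.mpr fun x => ?_
  by_cases hx : x ∈ M
  · refine continuousAt_iff.mpr fun ε hε => ⟨ε / 3, by positivity, fun {y} hy => ?_⟩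
    rw [Subtype.dist_eq, nearRetraction_coe hM ⟨x, hx⟩]
    linarith [dist_nearRetraction_le_three_mul_dist hM y ⟨x, hx⟩]
  · have hpos := (hM.notMem_iff_infDist_pos (Set.nonempty_coe_sort.mp ‹_›)).mp hx
    refine (continuousAt_const (y := nearRetraction M x)).congr
      (Filter.mem_of_superset (ball_mem_nhds x hpos) fun y hy => ?_)
    exact (nearRetraction_eq_of_dist_lt (mem_ball'.mp hy)).symm

end Ultrametric

end Metric

open Metric

theorem exists_continuous_extension_of_closed_general {X : Type*} [MetricSpace X]
    [IsUltrametricDist X] (K : Type*) [NontriviallyNormedField K] (M : Set X) (hM : IsClosed M)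
    (f : M → K) (hf : Continuous f) :
    ∃ g : X → K, Continuous g ∧ ∀ x : M, g x = f x := by
  rcases isEmpty_or_nonempty M with _ | _
  · exact ⟨0, continuous_const, isEmptyElim⟩
  · refine ⟨f ∘ nearRetraction M, hf.comp (continuous_nearRetraction hM), fun x => ?_⟩
    rw [Function.comp_apply, nearRetraction_coe hM]

/-- non-Archimedean Tietze extension theorem.  Let `(X, ρ)` be an
ultrametric space and let `K` be a locally compact field with a complete
non-Archimedean multiplicative norm whose value group is nontrivial.  If `M ⊆ X` is
closed and `f : M → K` is continuous, then `f` extends to a continuous `g : X → K`. -/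
theorem exists_continuous_extension_of_closed {X : Type*} [MetricSpace X]
    [IsUltrametricDist X] (K : Type*) [NontriviallyNormedField K] [IsUltrametricDist K]
    [CompleteSpace K] [LocallyCompactSpace K] (M : Set X) (hM : IsClosed M)
    (f : M → K) (hf : Continuous f) :
    ∃ g : X → K, Continuous g ∧ ∀ x : M, g x = f x :=
  exists_continuous_extension_of_closed_general K M hM f hf
end

section
/- Let U be an open subset of c₀ and let K_j be a compact subset of U for each j ∈ ℕ. Then there exists a homeomorphism g of c₀ \ ⋃_{j=1}^∞ K_j onto c₀ such that g restricted to c₀ \ U is the identity. -/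
/-!
Write `A = ⋃ⱼ Kⱼ`. Over a locally compact field, `c₀` is a complete separable ultrametric space
and, being infinite-dimensional, has no totally bounded set with nonempty interior (Riesz); by
Baire, `A` has dense complement. The balls `B(x, d(x, Uᶜ))`, `x ∈ U`, partition `U` into clopen
cells. For a nonempty open `B`, both `B` and the dense `Gδ` set `B \ A` carry a Lusin scheme of
clopen sets of vanishing diameter, with infinitely many children at every node, so both are
homeomorphic to the Baire space `ℕ → ℕ`. Gluing homeomorphisms `cell \ A ≃ cell` and the identity
on `Uᶜ` gives `g`: it is continuous at `Uᶜ` because every point moves only inside its cell, which is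
closer to the point than `Uᶜ` is.
-/

open Metric Set Filter Topology TopologicalSpace Function PiNat CantorScheme
open scoped ZeroAtInfty

namespace ZeroAtInftyContinuousMap

section Metric

variable {α E : Type*} [TopologicalSpace α] [PseudoMetricSpace E] [Zero E]

theorem dist_le {f g : C₀(α, E)} {C : ℝ} (hC : 0 ≤ C) :
    dist f g ≤ C ↔ ∀ x, dist (f x) (g x) ≤ C := by
  rw [← dist_toBCF_eq_dist]
  exact BoundedContinuousFunction.dist_le hC

instance isUltrametricDist [IsUltrametricDist E] : IsUltrametricDist C₀(α, E) where
  dist_triangle_max f g h := (dist_le (by positivity)).2 fun x ↦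
    (dist_triangle_max (f x) (g x) (h x)).trans
      (max_le_max ((dist_le dist_nonneg).1 le_rfl x) ((dist_le dist_nonneg).1 le_rfl x))

end Metric

section Nat

variable {E : Type*} [PseudoMetricSpace E] [Zero E]

def ofEventuallyZero (f : ℕ → E) (hf : f =ᶠ[atTop] 0) : C₀(ℕ, E) :=
  ⟨⟨f, continuous_of_discreteTopology⟩, by
    rw [cocompact_eq_atTop]; exact tendsto_const_nhds.congr' hf.symm⟩

def extendByZero (N : ℕ) (v : Fin N → E) : C₀(ℕ, E) :=
  ofEventuallyZero (fun m ↦ if h : m < N then v ⟨m, h⟩ else 0) <|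
    (eventually_ge_atTop N).mono fun _ hm ↦ dif_neg hm.not_gt

theorem extendByZero_apply (N : ℕ) (v : Fin N → E) (m : ℕ) :
    extendByZero N v m = if h : m < N then v ⟨m, h⟩ else 0 := rfl

theorem lipschitzWith_extendByZero (N : ℕ) : LipschitzWith 1 (extendByZero (E := E) N) :=
  LipschitzWith.of_dist_le_mul fun v w ↦ by
    rw [NNReal.coe_one, one_mul]
    refine (dist_le dist_nonneg).2 fun m ↦ ?_
    rw [extendByZero_apply, extendByZero_apply]
    split_ifs
    · exact dist_le_pi_dist v w _
    · simp

instance separableSpace [SeparableSpace E] : SeparableSpace C₀(ℕ, E) := by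
  refine isSeparable_univ_iff.1 <| (IsSeparable.iUnion fun N ↦
    isSeparable_range (lipschitzWith_extendByZero (E := E) N).continuous).closure.mono
    fun f _ ↦ Metric.mem_closure_iff.2 fun ε hε ↦ ?_
  have hf : Tendsto f atTop (𝓝 0) := by simpa [cocompact_eq_atTop] using f.zero_at_infty'
  obtain ⟨N, hN⟩ := Metric.tendsto_atTop.1 hf (ε / 2) (half_pos hε)
  refine ⟨extendByZero N fun i ↦ f i, mem_iUnion.2 ⟨N, mem_range_self _⟩, ?_⟩
  refine ((dist_le (half_pos hε).le).2 fun m ↦ ?_).trans_lt (half_lt_self hε)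
  rw [extendByZero_apply]
  split_ifs with hm
  · simpa using (half_pos hε).le
  · exact (hN m (not_lt.1 hm)).le

theorem not_finiteDimensional (𝕜 : Type*) [NontriviallyNormedField 𝕜] :
    ¬FiniteDimensional 𝕜 C₀(ℕ, 𝕜) := fun _ ↦ by
  let coeFn : C₀(ℕ, 𝕜) →ₗ[𝕜] ℕ → 𝕜 := ⟨⟨(⇑), coe_add⟩, coe_smul⟩
  let e (n : ℕ) : C₀(ℕ, 𝕜) := ofEventuallyZero (Pi.single n 1) <|
    (eventually_gt_atTop n).mono fun m hm ↦ Pi.single_eq_of_ne hm.ne' 1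
  exact Module.Finite.not_linearIndependent_of_infinite e
    (.of_comp coeFn (Pi.linearIndependent_single_one ℕ 𝕜))

end Nat

end ZeroAtInftyContinuousMap

theorem interior_eq_empty_of_totallyBounded {𝕜 E : Type*} [NontriviallyNormedField 𝕜]
    [CompleteSpace 𝕜] [NormedAddCommGroup E] [NormedSpace 𝕜 E] (hE : ¬FiniteDimensional 𝕜 E)
    {s : Set E} (hs : TotallyBounded s) : interior s = ∅ := by
  refine eq_empty_iff_forall_notMem.2 fun x hx ↦ hE ?_
  refine .of_totallyBounded_nhds_zero 𝕜 (U := (· - x) '' s) ?_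
    (hs.image (uniformContinuous_id.sub uniformContinuous_const))
  simpa using (Homeomorph.subRight x).isOpenMap.image_mem_nhds (mem_interior_iff_mem_nhds.1 hx)

theorem IsUltrametricDist.exists_clopen_partition {X : Type*} [PseudoMetricSpace X]
    [IsUltrametricDist X] [SecondCountableTopology X] {O : Set X} (hO : IsOpen O)
    (hO₀ : O.Nonempty) {r : ℝ} (hr : 0 < r) :
    ∃ E : ℕ → Set X, (∀ k, IsClopen (E k)) ∧ (∀ k, ∀ a ∈ E k, ∀ b ∈ E k, dist a b < r) ∧
      Pairwise (Disjoint on E) ∧ ⋃ k, E k = O := by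
  have hball : ∀ x : O, ∃ ε > 0, ε ≤ r ∧ ball (x : X) ε ⊆ O := fun x ↦ by
    obtain ⟨ε, hε, hεO⟩ := Metric.isOpen_iff.1 hO x x.2
    exact ⟨min ε r, lt_min hε hr, min_le_right _ _, (ball_subset_ball (min_le_left _ _)).trans hεO⟩
  choose ε hε hεr hεO using hball
  obtain ⟨T, hTc, hTU⟩ := isOpen_iUnion_countable (fun x : O ↦ ball (x : X) (ε x))
    fun _ ↦ isOpen_ball
  have hcover : ⋃ x : O, ball (x : X) (ε x) = O :=
    (iUnion_subset fun x ↦ hεO x).antisymm fun x hx ↦ mem_iUnion.2 ⟨⟨x, hx⟩, mem_ball_self (hε _)⟩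
  obtain ⟨u, rfl⟩ := hTc.exists_eq_range <| by
    obtain ⟨x, hx⟩ := hO₀
    rw [← hcover, ← hTU] at hx
    obtain ⟨y, hy, -⟩ := mem_iUnion₂.1 hx
    exact ⟨y, hy⟩
  let C (k : ℕ) : Set X := ball (u k : X) (ε (u k))
  refine ⟨disjointed C, fun k ↦ ?_, fun k a ha b hb ↦ ?_, disjoint_disjointed C, ?_⟩
  · rw [disjointed_eq_inter_compl]
    exact (IsUltrametricDist.isClopen_ball _ _).inter <|
      (finite_lt_nat k).isClopen_biInter fun j _ ↦ (IsUltrametricDist.isClopen_ball _ _).compl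
  · have ha' := disjointed_subset C k ha
    have hb' := disjointed_subset C k hb
    rw [mem_ball] at ha' hb'
    exact (dist_triangle_max a (u k) b).trans_lt
      ((max_lt ha' (dist_comm b (u k : X) ▸ hb')).trans_le (hεr _))
  · rw [iUnion_disjointed, ← hcover, ← hTU, biUnion_range]

structure NowhereTotallyBoundedGδ (X : Type*) [MetricSpace X] where
  V : ℕ → Set X
  isOpen_V : ∀ n, IsOpen (V n)
  nonempty : (⋂ n, V n).Nonempty
  not_totallyBounded :
    ∀ W, IsOpen W → (W ∩ ⋂ n, V n).Nonempty → ¬TotallyBounded (W ∩ ⋂ n, V n)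

namespace NowhereTotallyBoundedGδ

variable {X : Type*} [MetricSpace X] (S : NowhereTotallyBoundedGδ X)

abbrev carrier : Set X := ⋂ n, S.V n

structure IsSplitting (D : Set X) (n : ℕ) (E : ℕ → Set X) : Prop where
  isClopen : ∀ k, IsClopen (E k)
  inter_carrier_nonempty : ∀ k, (E k ∩ S.carrier).Nonempty
  subset : ∀ k, E k ⊆ D ∩ S.V n
  dist_lt : ∀ k, ∀ a ∈ E k, ∀ b ∈ E k, dist a b < 2⁻¹ ^ n
  pairwise_disjoint : Pairwise (Disjoint on E)
  inter_carrier_subset : D ∩ S.carrier ⊆ ⋃ k, E k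

variable [IsUltrametricDist X] [SecondCountableTopology X]

theorem exists_isSplitting {D : Set X} (hD : IsClopen D) (hDS : (D ∩ S.carrier).Nonempty)
    (n : ℕ) : ∃ E, S.IsSplitting D n E := by
  have hδ := S.not_totallyBounded D hD.isOpen hDS
  simp only [Metric.totallyBounded_iff, not_forall, not_exists, not_and] at hδ
  obtain ⟨δ, hδ, hnet⟩ := hδ
  obtain ⟨E, hEc, hEd, hEdisj, hEU⟩ := IsUltrametricDist.exists_clopen_partition
    (hD.isOpen.inter (S.isOpen_V n)) (hDS.mono (inter_subset_inter_right _ (iInter_subset _ n)))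
    (lt_min (by positivity : (0 : ℝ) < 2⁻¹ ^ n) hδ)
  have hcover : D ∩ S.carrier ⊆ ⋃ k, E k := fun x hx ↦
    hEU ▸ ⟨hx.1, mem_iInter.1 hx.2 n⟩
  -- Only the pieces meeting the carrier are kept; there are infinitely many of them, since
  -- finitely many would give a finite `δ`-net of `D ∩ carrier`.
  let p (k : ℕ) : Prop := (E k ∩ S.carrier).Nonempty
  have hp : (Set.ofPred p).Infinite := fun hfin ↦ by
    have := hfin.to_subtype
    choose q hq using fun k : Set.ofPred p ↦ k.2
    refine hnet (range q) (finite_range q) fun x hx ↦ ?_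
    obtain ⟨k, hk⟩ := mem_iUnion.1 (hcover hx)
    let k' : Set.ofPred p := ⟨k, x, hk, hx.2⟩
    exact mem_biUnion (mem_range_self k')
      (mem_ball.2 ((hEd k x hk _ (hq k').1).trans_le (min_le_right _ _)))
  refine ⟨fun k ↦ E (Nat.nth p k), ⟨fun k ↦ hEc _, fun k ↦ Nat.nth_mem_of_infinite hp k,
    fun k ↦ hEU ▸ subset_iUnion _ _,
    fun k a ha b hb ↦ (hEd _ a ha b hb).trans_le (min_le_left _ _),
    hEdisj.comp_of_injective (Nat.nth_injective hp), fun x hx ↦ ?_⟩⟩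
  obtain ⟨k, hk⟩ := mem_iUnion.1 (hcover hx)
  obtain ⟨m, rfl⟩ : k ∈ range (Nat.nth p) := (Nat.range_nth_of_infinite hp).symm ▸ ⟨x, hk, hx.2⟩
  exact mem_iUnion.2 ⟨m, hk⟩

noncomputable def split (D : Set X) (n : ℕ) : ℕ → Set X := Classical.epsilon (S.IsSplitting D n)

theorem isSplitting_split {D : Set X} (hD : IsClopen D) (hDS : (D ∩ S.carrier).Nonempty)
    (n : ℕ) : S.IsSplitting D n (S.split D n) :=
  Classical.epsilon_spec (S.exists_isSplitting hD hDS n)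

noncomputable def scheme : List ℕ → Set X
  | [] => univ
  | k :: l => S.split (scheme l) l.length k

theorem isSplitting_scheme :
    ∀ l, S.IsSplitting (S.scheme l) l.length fun k ↦ S.scheme (k :: l)
  | [] => S.isSplitting_split isClopen_univ (by simpa [scheme] using S.nonempty) 0
  | k :: l =>
    have h := isSplitting_scheme l
    S.isSplitting_split (h.isClopen k) (h.inter_carrier_nonempty k) _

theorem isClopen_scheme : ∀ l, IsClopen (S.scheme l)
  | [] => isClopen_univ
  | k :: l => (S.isSplitting_scheme l).isClopen k

theorem scheme_inter_carrier_nonempty : ∀ l, (S.scheme l ∩ S.carrier).Nonempty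
  | [] => by simpa [scheme] using S.nonempty
  | k :: l => (S.isSplitting_scheme l).inter_carrier_nonempty k

theorem scheme_cons_subset (k : ℕ) (l : List ℕ) : S.scheme (k :: l) ⊆ S.scheme l :=
  ((S.isSplitting_scheme l).subset k).trans inter_subset_left

theorem scheme_res_succ_subset (x : ℕ → ℕ) (n : ℕ) : S.scheme (res x (n + 1)) ⊆ S.V n := by
  simpa [res_succ] using ((S.isSplitting_scheme (res x n)).subset (x n)).trans inter_subset_right

theorem vanishingDiam_scheme : VanishingDiam S.scheme := fun x ↦ by
  rw [← tendsto_add_atTop_iff_nat 1]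
  have hlim : Tendsto (fun n : ℕ ↦ ENNReal.ofReal (2⁻¹ ^ n)) atTop (𝓝 0) := by
    simpa using ENNReal.tendsto_ofReal
      (tendsto_pow_atTop_nhds_zero_of_lt_one (by norm_num : (0 : ℝ) ≤ 2⁻¹) (by norm_num))
  refine tendsto_of_tendsto_of_tendsto_of_le_of_le tendsto_const_nhds hlim (fun _ ↦ zero_le)
    fun n ↦ ediam_le_of_forall_dist_le fun a ha b hb ↦ ?_
  rw [res_succ] at ha hb
  simpa using ((S.isSplitting_scheme (res x n)).dist_lt (x n) a ha b hb).le

theorem closureAntitone_scheme : ClosureAntitone S.scheme :=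
  Antitone.closureAntitone (fun l k ↦ S.scheme_cons_subset k l) fun l ↦
    (S.isClopen_scheme l).isClosed

theorem res_eq_of_mem_scheme {x x' : ℕ → ℕ} {y : X} {n : ℕ} (h : y ∈ S.scheme (res x n))
    (h' : y ∈ S.scheme (res x' n)) : res x n = res x' n := by
  induction n with
  | zero => rfl
  | succ n ih =>
    simp only [res_succ] at h h' ⊢
    have htail := ih (S.scheme_cons_subset _ _ h) (S.scheme_cons_subset _ _ h')
    rw [htail] at h ⊢
    congr 1
    by_contra hne
    exact ((S.isSplitting_scheme (res x' n)).pairwise_disjoint hne).ne_of_mem h h' rfl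

variable [CompleteSpace X]

theorem inducedMap_scheme_fst : (inducedMap S.scheme).1 = univ :=
  S.closureAntitone_scheme.map_of_vanishingDiam S.vanishingDiam_scheme fun l ↦
    (S.scheme_inter_carrier_nonempty l).mono inter_subset_left

noncomputable def limit (x : ℕ → ℕ) : X :=
  (inducedMap S.scheme).2 ⟨x, S.inducedMap_scheme_fst ▸ mem_univ x⟩

theorem limit_mem_scheme (x : ℕ → ℕ) (n : ℕ) : S.limit x ∈ S.scheme (res x n) :=
  map_mem _ n

theorem limit_mem_carrier (x : ℕ → ℕ) : S.limit x ∈ S.carrier :=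
  mem_iInter.2 fun n ↦ S.scheme_res_succ_subset x n (S.limit_mem_scheme x (n + 1))

theorem limit_injective : Injective S.limit := fun _ _ h ↦
  congrArg Subtype.val <|
    Disjoint.map_injective (fun l ↦ (S.isSplitting_scheme l).pairwise_disjoint) h

theorem continuous_limit : Continuous S.limit :=
  S.vanishingDiam_scheme.map_continuous.comp (continuous_id.subtype_mk _)

theorem limit_eq_of_forall_mem {x : ℕ → ℕ} {y : X} (hy : ∀ n, y ∈ S.scheme (res x n)) :
    S.limit x = y :=
  dist_le_zero.1 <| le_of_forall_gt fun ε hε ↦ by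
    obtain ⟨n, hn⟩ := S.vanishingDiam_scheme.dist_lt ε hε x
    exact hn _ (S.limit_mem_scheme x n) _ (hy n)

theorem exists_limit_eq {y : X} (hy : y ∈ S.carrier) : ∃ x, S.limit x = y := by
  have hstep (l : List ℕ) : ∃ k, y ∈ S.scheme l → y ∈ S.scheme (k :: l) := by
    by_cases hl : y ∈ S.scheme l
    · obtain ⟨k, hk⟩ := mem_iUnion.1 ((S.isSplitting_scheme l).inter_carrier_subset ⟨hl, hy⟩)
      exact ⟨k, fun _ ↦ hk⟩
    · exact ⟨0, fun h ↦ absurd h hl⟩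
  choose c hc using hstep
  let node : ℕ → List ℕ := fun n ↦ Nat.rec [] (fun _ l ↦ c l :: l) n
  have hres (n : ℕ) : res (fun n ↦ c (node n)) n = node n := by
    induction n with
    | zero => rfl
    | succ n ih => rw [res_succ, ih]
  refine ⟨fun n ↦ c (node n), S.limit_eq_of_forall_mem fun n ↦ hres n ▸ ?_⟩
  induction n with
  | zero => trivial
  | succ n ih => exact hc _ ih

theorem nonempty_homeomorph_nat_nat : Nonempty (S.carrier ≃ₜ (ℕ → ℕ)) := by
  let f : (ℕ → ℕ) → S.carrier := fun x ↦ ⟨S.limit x, S.limit_mem_carrier x⟩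
  have hf : Bijective f := ⟨fun _ _ h ↦ S.limit_injective (congrArg Subtype.val h),
    fun y ↦ (S.exists_limit_eq y.2).imp fun _ h ↦ Subtype.ext h⟩
  have himage (x : ℕ → ℕ) (n : ℕ) : f '' cylinder x n = Subtype.val ⁻¹' S.scheme (res x n) := by
    ext y
    refine ⟨?_, fun hy ↦ ?_⟩
    · rintro ⟨x', hx', rfl⟩
      rw [cylinder_eq_res] at hx'
      exact hx' ▸ S.limit_mem_scheme x' n
    · obtain ⟨x', hx'⟩ := S.exists_limit_eq y.2
      refine ⟨x', ?_, Subtype.ext hx'⟩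
      rw [cylinder_eq_res]
      exact S.res_eq_of_mem_scheme (hx' ▸ S.limit_mem_scheme x' n) hy
  have hopen : IsOpenMap f := by
    rw [(isTopologicalBasis_cylinders fun _ ↦ ℕ).isOpenMap_iff]
    rintro _ ⟨x, n, rfl⟩
    rw [himage]
    exact (S.isClopen_scheme _).isOpen.preimage continuous_subtype_val
  exact ⟨(Equiv.toHomeomorphOfContinuousOpen (.ofBijective f hf)
    (S.continuous_limit.subtype_mk _) hopen).symm⟩

end NowhereTotallyBoundedGδ

section Gluing

variable {X : Type*} [MetricSpace X]

/-- As in a Whitney decomposition, the cells shrink towards `Uᶜ`: a map moving points only inside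
their cells is therefore continuous at the points of `Uᶜ` it fixes. -/
structure IsWhitneyPartition (U : Set X) (P : X → Set X) : Prop where
  isOpen : ∀ x ∈ U, IsOpen (P x)
  self_mem : ∀ x ∈ U, x ∈ P x
  eq_of_mem : ∀ x ∈ U, ∀ y ∈ P x, P y = P x
  dist_lt : ∀ x ∈ U, ∀ y ∈ P x, ∀ z ∉ U, dist x y < dist x z

theorem IsUltrametricDist.exists_isWhitneyPartition [IsUltrametricDist X] {U : Set X}
    (hU : IsOpen U) : ∃ P, IsWhitneyPartition U P := by
  rcases Uᶜ.eq_empty_or_nonempty with hUc | hUc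
  · exact ⟨fun _ ↦ univ, ⟨fun _ _ ↦ isOpen_univ, fun _ _ ↦ mem_univ _, fun _ _ _ _ ↦ rfl,
      fun _ _ _ _ z hz ↦ (eq_empty_iff_forall_notMem.1 hUc z hz).elim⟩⟩
  have hpos : ∀ x ∈ U, 0 < infDist x Uᶜ := fun x hx ↦
    (hU.isClosed_compl.notMem_iff_infDist_pos hUc).1 (not_not.2 hx)
  have hdist (x : X) {y : X} (hy : y ∈ ball x (infDist x Uᶜ)) : ∀ z ∉ U, dist x y < dist x z :=
    fun z hz ↦ (mem_ball'.1 hy).trans_le (infDist_le_dist_of_mem hz)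
  refine ⟨fun x ↦ ball x (infDist x Uᶜ), ⟨fun _ _ ↦ isOpen_ball,
    fun x hx ↦ mem_ball_self (hpos x hx), fun x _ y hy ↦ ?_, fun x _ y hy ↦ hdist x hy⟩⟩
  -- Points of `Uᶜ` are equidistant from `x` and `y` (all triangles are isosceles).
  have hinf : infDist y Uᶜ = infDist x Uᶜ := by
    simp only [infDist_eq_iInf]
    congr 1
    ext z
    have hyz : dist y x < dist x z := dist_comm x y ▸ hdist x hy z z.2
    exact (IsUltrametricDist.dist_eq_max_of_dist_ne_dist y x z hyz.ne).trans (max_eq_right hyz.le)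
  rw [hinf]
  exact (IsUltrametricDist.ball_eq_of_mem hy).symm

namespace IsWhitneyPartition

variable {U : Set X} {P : X → Set X}

theorem subset (hP : IsWhitneyPartition U P) {x : X} (hx : x ∈ U) : P x ⊆ U :=
  fun y hy ↦ by_contra fun hyU ↦ (hP.dist_lt x hx y hy y hyU).false

theorem continuousWithinAt_of_mem_cell (hP : IsWhitneyPartition U P) {f : X → X} {s : Set X}
    (hf : ∀ y ∈ s, y ∈ U → f y ∈ P y) (hfix : ∀ y ∉ U, f y = y) {z : X} (hz : z ∉ U) :
    ContinuousWithinAt f s z := by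
  have hle : ∀ y ∈ s, dist (f y) z ≤ 2 * dist y z := fun y hys ↦ by
    by_cases hy : y ∈ U
    · have := hP.dist_lt y hy (f y) (hf y hys hy) z hz
      linarith [dist_triangle (f y) y z, dist_comm (f y) y]
    · rw [hfix y hy]
      linarith [dist_nonneg (x := y) (y := z)]
  rw [ContinuousWithinAt, hfix z hz, tendsto_iff_dist_tendsto_zero]
  refine squeeze_zero' (Eventually.of_forall fun _ ↦ dist_nonneg)
    (eventually_nhdsWithin_of_forall hle) ?_
  simpa using ((continuous_id.dist continuous_const).tendsto' z 0 (dist_self z)).const_mul 2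
    |>.mono_left nhdsWithin_le_nhds

end IsWhitneyPartition

structure IsCellwise (U : Set X) (P : X → Set X) (s t : Set X)
    (φ : X → PartialHomeomorph X X) : Prop where
  eq_of_mem : ∀ x ∈ U, ∀ y ∈ P x, φ y = φ x
  source_eq : ∀ x ∈ U, (φ x).source = P x ∩ s
  target_eq : ∀ x ∈ U, (φ x).target = P x ∩ t
  sdiff_eq : s \ U = t \ U

open Classical in
noncomputable def cellwiseFun (U : Set X) (φ : X → PartialHomeomorph X X) (y : X) : X :=
  if y ∈ U then φ y y else y

theorem cellwiseFun_of_mem {U : Set X} (φ : X → PartialHomeomorph X X) {y : X} (hy : y ∈ U) :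
    cellwiseFun U φ y = φ y y := if_pos hy

theorem cellwiseFun_of_notMem {U : Set X} (φ : X → PartialHomeomorph X X) {y : X} (hy : y ∉ U) :
    cellwiseFun U φ y = y := if_neg hy

namespace IsCellwise

variable {U : Set X} {P : X → Set X} {s t : Set X} {φ : X → PartialHomeomorph X X}

theorem symm (hφ : IsCellwise U P s t φ) : IsCellwise U P t s fun x ↦ (φ x).symm where
  eq_of_mem x hx y hy := by rw [hφ.eq_of_mem x hx y hy]
  source_eq x hx := by rw [PartialHomeomorph.symm_source, hφ.target_eq x hx]
  target_eq x hx := by rw [PartialHomeomorph.symm_target, hφ.source_eq x hx]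
  sdiff_eq := hφ.sdiff_eq.symm

variable (hP : IsWhitneyPartition U P) (hφ : IsCellwise U P s t φ)
include hP hφ

theorem mem_source {y : X} (hy : y ∈ U) (hys : y ∈ s) : y ∈ (φ y).source :=
  hφ.source_eq y hy ▸ ⟨hP.self_mem y hy, hys⟩

theorem apply_mem {y : X} (hy : y ∈ U) (hys : y ∈ s) : φ y y ∈ P y ∩ t :=
  hφ.target_eq y hy ▸ (φ y).map_source (hφ.mem_source hP hy hys)

theorem mapsTo : MapsTo (cellwiseFun U φ) s t := fun y hys ↦ by
  by_cases hy : y ∈ U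
  · rw [cellwiseFun_of_mem φ hy]
    exact (hφ.apply_mem hP hy hys).2
  · rw [cellwiseFun_of_notMem φ hy]
    exact (hφ.sdiff_eq ▸ ⟨hys, hy⟩ : y ∈ t \ U).1

theorem leftInvOn : LeftInvOn (cellwiseFun U fun x ↦ (φ x).symm) (cellwiseFun U φ) s :=
  fun y hys ↦ by
  by_cases hy : y ∈ U
  · have hmem := (hφ.apply_mem hP hy hys).1
    rw [cellwiseFun_of_mem φ hy, cellwiseFun_of_mem _ (hP.subset hy hmem),
      hφ.eq_of_mem y hy _ hmem, (φ y).left_inv (hφ.mem_source hP hy hys)]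
  · rw [cellwiseFun_of_notMem φ hy, cellwiseFun_of_notMem _ hy]

theorem continuousOn : ContinuousOn (cellwiseFun U φ) s := fun y hys ↦ by
  by_cases hy : y ∈ U
  · have hcell : P y ∩ s ∈ 𝓝[s] y := inter_mem
      (mem_nhdsWithin_of_mem_nhds ((hP.isOpen y hy).mem_nhds (hP.self_mem y hy)))
      self_mem_nhdsWithin
    have hcont : ContinuousOn (cellwiseFun U φ) (P y ∩ s) := by
      refine ((hφ.source_eq y hy) ▸ (φ y).continuousOn).congr fun y' hy' ↦ ?_
      rw [cellwiseFun_of_mem φ (hP.subset hy hy'.1), hφ.eq_of_mem y hy y' hy'.1]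
    exact (hcont y ⟨hP.self_mem y hy, hys⟩).mono_of_mem_nhdsWithin hcell
  · refine hP.continuousWithinAt_of_mem_cell (fun y' hy's hy' ↦ ?_)
      (fun y' hy' ↦ cellwiseFun_of_notMem φ hy') hy
    rw [cellwiseFun_of_mem φ hy']
    exact (hφ.apply_mem hP hy' hy's).1

noncomputable def glue : PartialHomeomorph X X where
  toFun := cellwiseFun U φ
  invFun := cellwiseFun U fun x ↦ (φ x).symm
  source := s
  target := t
  map_source' := hφ.mapsTo hP
  map_target' := hφ.symm.mapsTo hP
  left_inv' := hφ.leftInvOn hP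
  right_inv' z hz := by simpa only [PartialHomeomorph.symm_symm] using hφ.symm.leftInvOn hP hz
  continuousOn_toFun := hφ.continuousOn hP
  continuousOn_invFun := hφ.symm.continuousOn hP

end IsCellwise

theorem Homeomorph.exists_partialHomeomorph {s t : Set X} (e : s ≃ₜ t) :
    ∃ φ : PartialHomeomorph X X, φ.source = s ∧ φ.target = t := by
  classical
  let extend {s t : Set X} (f : s → t) (y : X) : X := if h : y ∈ s then f ⟨y, h⟩ else y
  have extend_of_mem {s t : Set X} (f : s → t) {y : X} (hy : y ∈ s) : extend f y = f ⟨y, hy⟩ :=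
    dif_pos hy
  have hcont {s t : Set X} (f : s ≃ₜ t) : ContinuousOn (extend f) s := by
    have hres : s.domRestrict (extend f) = Subtype.val ∘ f := funext fun y ↦ extend_of_mem f y.2
    rw [continuousOn_iff_continuous_domRestrict, hres]
    exact continuous_subtype_val.comp f.continuous
  refine ⟨⟨⟨extend e, extend e.symm, s, t, fun y hy ↦ ?_, fun y hy ↦ ?_, fun y hy ↦ ?_,
    fun y hy ↦ ?_⟩, hcont e, hcont e.symm⟩, rfl, rfl⟩
  · simp [extend_of_mem e hy]
  · simp [extend_of_mem e.symm hy]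
  · simp [extend_of_mem e hy, extend_of_mem e.symm (e ⟨y, hy⟩).2]
  · simp [extend_of_mem e.symm hy, extend_of_mem e (e.symm ⟨y, hy⟩).2]

theorem IsWhitneyPartition.exists_homeomorph_compl {U A : Set X} {P : X → Set X}
    (hP : IsWhitneyPartition U P) (hAU : A ⊆ U)
    (he : ∀ x ∈ U, Nonempty (↥(P x \ A) ≃ₜ ↥(P x))) :
    ∃ g : ↥Aᶜ ≃ₜ X, ∀ x : ↥Aᶜ, (x : X) ∉ U → g x = x := by
  -- Choosing the local homeomorphism as a function of the cell makes it constant on cells.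
  have hcell (S : Set X) : ∃ φ : PartialHomeomorph X X,
      (∃ x ∈ U, P x = S) → φ.source = S \ A ∧ φ.target = S := by
    by_cases hS : ∃ x ∈ U, P x = S
    · obtain ⟨x, hx, rfl⟩ := hS
      obtain ⟨φ, hφs, hφt⟩ := (he x hx).some.exists_partialHomeomorph
      exact ⟨φ, fun _ ↦ ⟨hφs, hφt⟩⟩
    · exact ⟨PartialHomeomorph.refl X, fun h ↦ absurd h hS⟩
  choose ψ hψ using hcell
  have hφ : IsCellwise U P Aᶜ univ fun x ↦ ψ (P x) :=
    { eq_of_mem := fun x hx y hy ↦ by rw [hP.eq_of_mem x hx y hy]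
      source_eq := fun x hx ↦ (hψ _ ⟨x, hx, rfl⟩).1
      target_eq := fun x hx ↦ (inter_univ (P x)).symm ▸ (hψ _ ⟨x, hx, rfl⟩).2
      sdiff_eq := by
        ext y
        simp only [Set.mem_sdiff, mem_compl_iff, mem_univ, true_and]
        exact ⟨And.right, fun hy ↦ ⟨fun hA ↦ hy (hAU hA), hy⟩⟩ }
  exact ⟨(hφ.glue hP).toHomeomorphSourceTarget.trans (Homeomorph.Set.univ X),
    fun x hx ↦ cellwiseFun_of_notMem (fun x ↦ ψ (P x)) hx⟩

end Gluing

section Assembly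

variable {X : Type*} [MetricSpace X]

def NowhereTotallyBoundedGδ.ofDense (hX : ∀ s : Set X, TotallyBounded s → interior s = ∅)
    {B : Set X} (hB : IsOpen B) (hBne : B.Nonempty) (V : ℕ → Set X) (hV : ∀ n, IsOpen (V n))
    (hVB : ⋂ n, V n ⊆ B) (hBV : B ⊆ closure (⋂ n, V n)) : NowhereTotallyBoundedGδ X where
  V := V
  isOpen_V := hV
  nonempty := closure_nonempty_iff.1 (hBne.mono hBV)
  not_totallyBounded W hW hne htb := by
    have hsub : W ∩ B ⊆ interior (closure (W ∩ ⋂ n, V n)) := (hW.inter hB).subset_interior_iff.2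
      ((inter_subset_inter_right W hBV).trans hW.inter_closure)
    rw [hX _ htb.closure] at hsub
    obtain ⟨x, hxW, hxV⟩ := hne
    exact hsub ⟨hxW, hVB hxV⟩

variable [IsUltrametricDist X] [SecondCountableTopology X] [CompleteSpace X]

theorem nonempty_homeomorph_sdiff_iUnion (hX : ∀ s : Set X, TotallyBounded s → interior s = ∅)
    {A : ℕ → Set X} (hA : ∀ n, IsClosed (A n)) (hAd : Dense (⋃ n, A n)ᶜ) {B : Set X}
    (hB : IsOpen B) (hBne : B.Nonempty) : Nonempty (↥(B \ ⋃ n, A n) ≃ₜ ↥B) := by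
  have hdiff : B \ ⋃ n, A n = ⋂ n, B \ A n := sdiff_iUnion B A
  let S₁ := NowhereTotallyBoundedGδ.ofDense hX hB hBne (fun n ↦ B \ A n)
    (fun n ↦ hB.sdiff (hA n)) (hdiff ▸ sdiff_subset) (hdiff ▸ hAd.open_subset_closure_inter hB)
  let S₂ := NowhereTotallyBoundedGδ.ofDense hX hB hBne (fun _ ↦ B) (fun _ ↦ hB)
    (iInter_const B).subset (by rw [iInter_const]; exact subset_closure)
  obtain ⟨e₁⟩ := S₁.nonempty_homeomorph_nat_nat
  obtain ⟨e₂⟩ := S₂.nonempty_homeomorph_nat_nat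
  exact ⟨(Homeomorph.setCongr hdiff).trans
    (e₁.trans (e₂.symm.trans (Homeomorph.setCongr (iInter_const (ι := ℕ) B))))⟩

theorem exists_homeomorph_compl_iUnion (hX : ∀ s : Set X, TotallyBounded s → interior s = ∅)
    {U : Set X} (hU : IsOpen U) {A : ℕ → Set X} (hA : ∀ n, IsCompact (A n))
    (hAU : ∀ n, A n ⊆ U) :
    ∃ g : ↥(⋃ n, A n)ᶜ ≃ₜ X, ∀ x : ↥(⋃ n, A n)ᶜ, (x : X) ∉ U → g x = x := by
  have hAd : Dense (⋃ n, A n)ᶜ := by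
    rw [compl_iUnion]
    exact dense_iInter_of_isOpen (fun n ↦ (hA n).isClosed.isOpen_compl)
      fun n ↦ interior_eq_empty_iff_dense_compl.1 (hX _ (hA n).totallyBounded)
  obtain ⟨P, hP⟩ := IsUltrametricDist.exists_isWhitneyPartition hU
  exact hP.exists_homeomorph_compl (iUnion_subset hAU) fun x hx ↦
    nonempty_homeomorph_sdiff_iUnion hX (fun n ↦ (hA n).isClosed) hAd (hP.isOpen x hx)
      ⟨x, hP.self_mem x hx⟩

end Assembly

/-- Let `K` be a locally compact field with a complete
non-Archimedean multiplicative norm whose value group is nontrivial.  Let `U` be an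
open subset of `c₀ = c₀(ℕ, K)` and let `K_j ⊆ U` be compact for each `j ∈ ℕ`.  Then
there is a homeomorphism `g` of `c₀ \ ⋃_j K_j` onto `c₀` which is the identity on
`c₀ \ U`. -/
theorem exists_homeomorph_c0_sdiff_compacts (K : Type*) [NontriviallyNormedField K]
    [IsUltrametricDist K] [CompleteSpace K] [LocallyCompactSpace K]
    (U : Set C₀(ℕ, K)) (hU : IsOpen U) (Kj : ℕ → Set C₀(ℕ, K))
    (hKc : ∀ j, IsCompact (Kj j)) (hKU : ∀ j, Kj j ⊆ U) :
    ∃ g : ↥((⋃ j, Kj j)ᶜ) ≃ₜ C₀(ℕ, K),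
      ∀ x : ↥((⋃ j, Kj j)ᶜ), (x : C₀(ℕ, K)) ∉ U → g x = (x : C₀(ℕ, K)) := by
  have : ProperSpace K := .of_locallyCompactSpace K
  have : SecondCountableTopology C₀(ℕ, K) := UniformSpace.secondCountable_of_separable _
  exact exists_homeomorph_compl_iUnion (fun _ ↦ interior_eq_empty_of_totallyBounded
    (ZeroAtInftyContinuousMap.not_finiteDimensional K)) hU hKc hKU
end
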